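/- arXiv:1810.04944 — 4 statements merged into one kernel-verified Lean document; each statement's English description precedes it below -/
import Mathlib

section
/- Let v_g^{(1)} = −α v_g^{(2)} with α > 0, v_g^{(2)} ≠ 0, κ11, κ22 ∈ ℝ, κ12 ∈ ℂ, κ12 ≠ 0. Then the set of Ω ∈ ℝ for which there exist K ∈ ℝ^d with det(diag(v_g^{(1)}·K, v_g^{(2)}·K) − [[κ11, κ12],[conj(κ12), κ22]] − Ω I) = 0 omits the open interval centered at −(κ22|v_g^{(1)}| + κ11|v_g^{(2)}|)/(|v_g^{(1)}| + |v_g^{(2)}|) with half-width 2|κ12| sqrt(|v_g^{(1)}||v_g^{(2)}|)/(|v_g^{(1)}| + |v_g^{(2)}|); i.e., there is a spectral gap of exactly this interval. -/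
open RealInnerProductSpace

/-- Two-mode coupled mode matrix `L(K) = diag(v1·K, v2·K) - κ`,
`κ = [[κ11, κ12],[conj κ12, κ22]]`. -/
noncomputable def L2matK {d : ℕ} (v1 v2 : EuclideanSpace ℝ (Fin d)) (κ11 κ22 : ℝ)
    (κ12 : ℂ) (K : EuclideanSpace ℝ (Fin d)) : Matrix (Fin 2) (Fin 2) ℂ :=
  !![((⟪v1, K⟫ : ℝ) : ℂ) - (κ11 : ℂ), -κ12;
     -(starRingEnd ℂ) κ12, ((⟪v2, K⟫ : ℝ) : ℂ) - (κ22 : ℂ)]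

/-!
With `v1 = -α • v2`, the determinant of `L(K) - Ω` depends on `K` only through
`t = ⟪v2, K⟫`, which ranges over all of `ℝ`, and equals
`(-α t - κ11 - Ω) (t - κ22 - Ω) - ‖κ12‖²`. So `Ω` is in the spectrum iff this quadratic
in `t` has a real root, i.e. iff its discriminant `((α + 1) Ω + α κ22 + κ11)² - 4 α ‖κ12‖²`
is nonnegative, which says exactly that `Ω` lies outside the stated interval.
-/

theorem Real.exists_quadratic_eq_zero_iff_discrim_nonneg {a b c : ℝ} (ha : a ≠ 0) :
    (∃ x : ℝ, a * (x * x) + b * x + c = 0) ↔ 0 ≤ discrim a b c := by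
  constructor
  · rintro ⟨x, hx⟩
    rw [discrim_eq_sq_of_quadratic_eq_zero hx]
    exact sq_nonneg _
  · intro h
    exact exists_quadratic_eq_zero ha ⟨√(discrim a b c), (Real.mul_self_sqrt h).symm⟩

theorem exists_neg_mul_sub_mul_sub_eq_iff {α : ℝ} (hα : α ≠ 0) (a b c : ℝ) :
    (∃ t : ℝ, (-(α * t) - a) * (t - b) = c) ↔ 4 * α * c ≤ (a + α * b) ^ 2 := by
  have hquad (t : ℝ) : (-(α * t) - a) * (t - b) = c ↔
      -α * (t * t) + (α * b - a) * t + (a * b - c) = 0 := by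
    constructor <;> intro h <;> linear_combination h
  simp only [hquad, Real.exists_quadratic_eq_zero_iff_discrim_nonneg (neg_ne_zero.2 hα),
    discrim]
  constructor <;> intro h <;> linarith

theorem sq_le_sq_mul_add_iff_notMem_Ioo {p R : ℝ} (hp : 0 < p) (hR : 0 ≤ R) (q x : ℝ) :
    R ^ 2 ≤ (p * x + q) ^ 2 ↔ x ∉ Set.Ioo (-(q / p) - R / p) (-(q / p) + R / p) := by
  have hdist : |x - -(q / p)| = |p * x + q| / p := by
    rw [eq_div_iff hp.ne', ← abs_of_pos hp, ← abs_mul, abs_of_pos hp]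
    congr 1
    field_simp
    ring
  rw [← Real.ball_eq_Ioo, Metric.mem_ball, Real.dist_eq, hdist, div_lt_div_iff_of_pos_right hp,
    not_lt, sq_le_sq, abs_of_nonneg hR]

theorem exists_inner_eq_of_ne_zero {E : Type*} [NormedAddCommGroup E] [InnerProductSpace ℝ E]
    {v : E} (hv : v ≠ 0) (t : ℝ) : ∃ K : E, ⟪v, K⟫ = t := by
  refine ⟨(t / ‖v‖ ^ 2) • v, ?_⟩
  rw [real_inner_smul_right, real_inner_self_eq_norm_sq]
  field_simp [norm_ne_zero_iff.2 hv]

theorem det_L2matK_sub_smul_one {d : ℕ} (v1 v2 : EuclideanSpace ℝ (Fin d)) (κ11 κ22 : ℝ)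
    (κ12 : ℂ) (K : EuclideanSpace ℝ (Fin d)) (Ω : ℝ) :
    (L2matK v1 v2 κ11 κ22 κ12 K - (Ω : ℂ) • 1).det =
      (((⟪v1, K⟫ - κ11 - Ω) * (⟪v2, K⟫ - κ22 - Ω) - ‖κ12‖ ^ 2 : ℝ) : ℂ) := by
  simp [L2matK, Matrix.det_fin_two, Complex.mul_conj, Complex.normSq_eq_norm_sq]

theorem exists_det_L2matK_eq_zero_iff_of_antiparallel {d : ℕ} {α : ℝ}
    {v1 v2 : EuclideanSpace ℝ (Fin d)} (hv2 : v2 ≠ 0) (hv1 : v1 = (-α) • v2)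
    (κ11 κ22 : ℝ) (κ12 : ℂ) (Ω : ℝ) :
    (∃ K, (L2matK v1 v2 κ11 κ22 κ12 K - (Ω : ℂ) • 1).det = 0) ↔
      ∃ t : ℝ, (-(α * t) - (κ11 + Ω)) * (t - (κ22 + Ω)) = ‖κ12‖ ^ 2 := by
  have hdet (K : EuclideanSpace ℝ (Fin d)) :
      (L2matK v1 v2 κ11 κ22 κ12 K - (Ω : ℂ) • 1).det = 0 ↔
        (-(α * ⟪v2, K⟫) - (κ11 + Ω)) * (⟪v2, K⟫ - (κ22 + Ω)) = ‖κ12‖ ^ 2 := by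
    rw [det_L2matK_sub_smul_one, Complex.ofReal_eq_zero, sub_eq_zero, hv1,
      real_inner_smul_left]
    ring_nf
  simp only [hdet]
  constructor
  · rintro ⟨K, hK⟩
    exact ⟨_, hK⟩
  · rintro ⟨t, ht⟩
    obtain ⟨K, rfl⟩ := exists_inner_eq_of_ne_zero hv2 t
    exact ⟨K, ht⟩

theorem stmt3_general (d : ℕ) (α : ℝ) (hα : 0 < α) (v2 : EuclideanSpace ℝ (Fin d))
    (hv2 : v2 ≠ 0) (v1 : EuclideanSpace ℝ (Fin d)) (hv1 : v1 = (-α) • v2)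
    (κ11 κ22 : ℝ) (κ12 : ℂ) :
    {Ω : ℝ | ∃ K : EuclideanSpace ℝ (Fin d),
        (L2matK v1 v2 κ11 κ22 κ12 K - (Ω : ℂ) • 1).det = 0}
      = (Set.Ioo
          (-((κ22 * ‖v1‖ + κ11 * ‖v2‖) / (‖v1‖ + ‖v2‖))
            - 2 * ‖κ12‖ * Real.sqrt (‖v1‖ * ‖v2‖) / (‖v1‖ + ‖v2‖))
          (-((κ22 * ‖v1‖ + κ11 * ‖v2‖) / (‖v1‖ + ‖v2‖))
            + 2 * ‖κ12‖ * Real.sqrt (‖v1‖ * ‖v2‖) / (‖v1‖ + ‖v2‖)))ᶜ := by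
  have hv2_pos : 0 < ‖v2‖ := norm_pos_iff.2 hv2
  have hv1_norm : ‖v1‖ = α * ‖v2‖ := by
    rw [hv1, norm_smul, Real.norm_eq_abs, abs_neg, abs_of_pos hα]
  have hcenter :
      (κ22 * ‖v1‖ + κ11 * ‖v2‖) / (‖v1‖ + ‖v2‖) = (κ22 * α + κ11) / (α + 1) := by
    rw [hv1_norm]
    field_simp
  have hradius :
      2 * ‖κ12‖ * √(‖v1‖ * ‖v2‖) / (‖v1‖ + ‖v2‖) = 2 * ‖κ12‖ * √α / (α + 1) := by
    rw [hv1_norm, mul_assoc α, Real.sqrt_mul hα.le, Real.sqrt_mul_self hv2_pos.le]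
    field_simp
  have hdiscrim (Ω : ℝ) : 4 * α * ‖κ12‖ ^ 2 ≤ (κ11 + Ω + α * (κ22 + Ω)) ^ 2 ↔
      (2 * ‖κ12‖ * √α) ^ 2 ≤ ((α + 1) * Ω + (κ22 * α + κ11)) ^ 2 := by
    rw [mul_pow, mul_pow, Real.sq_sqrt hα.le]
    ring_nf
  ext Ω
  rw [hcenter, hradius, Set.mem_ofPred_eq, Set.mem_compl_iff,
    exists_det_L2matK_eq_zero_iff_of_antiparallel hv2 hv1,
    exists_neg_mul_sub_mul_sub_eq_iff hα.ne', hdiscrim,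
    sq_le_sq_mul_add_iff_notMem_Ioo (by linarith) (by positivity)]

/-- for anti-parallel group velocities `v1 = -α • v2` (`α > 0`) and
`κ12 ≠ 0` the set of attained eigenvalues is exactly the complement of the open
interval centered at `-(κ22‖v1‖ + κ11‖v2‖)/(‖v1‖+‖v2‖)` with half-width
`2|κ12|√(‖v1‖‖v2‖)/(‖v1‖+‖v2‖)`: a spectral gap of exactly this interval. -/
theorem stmt3 (d : ℕ) (α : ℝ) (hα : 0 < α) (v2 : EuclideanSpace ℝ (Fin d))
    (hv2 : v2 ≠ 0) (v1 : EuclideanSpace ℝ (Fin d)) (hv1 : v1 = (-α) • v2)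
    (κ11 κ22 : ℝ) (κ12 : ℂ) (hκ12 : κ12 ≠ 0) :
    {Ω : ℝ | ∃ K : EuclideanSpace ℝ (Fin d),
        (L2matK v1 v2 κ11 κ22 κ12 K - (Ω : ℂ) • 1).det = 0}
      = (Set.Ioo
          (-((κ22 * ‖v1‖ + κ11 * ‖v2‖) / (‖v1‖ + ‖v2‖))
            - 2 * ‖κ12‖ * Real.sqrt (‖v1‖ * ‖v2‖) / (‖v1‖ + ‖v2‖))
          (-((κ22 * ‖v1‖ + κ11 * ‖v2‖) / (‖v1‖ + ‖v2‖))
            + 2 * ‖κ12‖ * Real.sqrt (‖v1‖ * ‖v2‖) / (‖v1‖ + ‖v2‖)))ᶜ :=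
  stmt3_general d α hα v2 hv2 v1 hv1 κ11 κ22 κ12
end

section
/- Let d ≥ 2 and let v_g^{(1)}, v_g^{(2)} ∈ ℝ^d \ {0} be linearly independent. Then for every Ω ∈ ℝ there exists a unit vector j ∈ ℝ^d with (j·v_g^{(1)})(j·v_g^{(2)}) > 0, and consequently for every Ω ∈ ℝ there exists K ∈ ℝ^d such that det(diag(v_g^{(1)}·K, v_g^{(2)}·K) − κ − Ω I) = 0 for any Hermitian 2×2 matrix κ; hence the two-mode coupled mode operator has no spectral gap. -/
open RealInnerProductSpace

/-- if `v1, v2` are linearly independent in `ℝ^d`, `d ≥ 2`, then for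
every `Ω` there is a unit direction `j` with `(j·v1)(j·v2) > 0`, and for any
Hermitian `κ` and every `Ω` some `K` makes `Ω` an eigenvalue: no spectral gap. -/
theorem stmt4 (d : ℕ) (hd : 2 ≤ d) (v1 v2 : EuclideanSpace ℝ (Fin d))
    (hv1 : v1 ≠ 0) (hv2 : v2 ≠ 0) (hLI : LinearIndependent ℝ ![v1, v2]) :
    (∀ _Ω : ℝ, ∃ j : EuclideanSpace ℝ (Fin d), ‖j‖ = 1 ∧ 0 < ⟪j, v1⟫ * ⟪j, v2⟫) ∧
    ∀ κ : Matrix (Fin 2) (Fin 2) ℂ, κ.IsHermitian → ∀ Ω : ℝ,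
      ∃ K : EuclideanSpace ℝ (Fin d),
        (!![((⟪v1, K⟫ : ℝ) : ℂ), 0; 0, ((⟪v2, K⟫ : ℝ) : ℂ)] - κ - (Ω : ℂ) • 1).det = 0 := by
  have hn1 : (0:ℝ) < ‖v1‖ := norm_pos_iff.2 hv1
  have hn2 : (0:ℝ) < ‖v2‖ := norm_pos_iff.2 hv2
  have hpair := LinearIndependent.pair_iff.1 hLI
  -- strict Cauchy-Schwarz: -‖v1‖‖v2‖ < ⟪v1, v2⟫
  have hcs : ⟪v1, -v2⟫ < ‖v1‖ * ‖-v2‖ := by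
    refine inner_lt_norm_mul_iff_real.2 ?_
    intro h
    rw [norm_neg] at h
    have h0 : ‖v2‖ • v1 + ‖v1‖ • v2 = 0 := by
      rw [h]; simp
    exact absurd ((hpair _ _ h0).1) (ne_of_gt hn2)
  have hD : 0 < ‖v1‖ * ‖v2‖ + ⟪v1, v2⟫ := by
    rw [norm_neg, inner_neg_right] at hcs; linarith
  constructor
  · intro _Ω
    set u : EuclideanSpace ℝ (Fin d) := ‖v2‖ • v1 + ‖v1‖ • v2 with hu
    have hu1 : ⟪u, v1⟫ = ‖v2‖ * ‖v1‖^2 + ‖v1‖ * ⟪v1, v2⟫ := by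
      rw [hu, inner_add_left, real_inner_smul_left, real_inner_smul_left,
        real_inner_self_eq_norm_sq, real_inner_comm v2 v1]
    have hu2 : ⟪u, v2⟫ = ‖v2‖ * ⟪v1, v2⟫ + ‖v1‖ * ‖v2‖^2 := by
      rw [hu, inner_add_left, real_inner_smul_left, real_inner_smul_left,
        real_inner_self_eq_norm_sq]
    have hu1pos : 0 < ⟪u, v1⟫ := by rw [hu1]; nlinarith
    have hu2pos : 0 < ⟪u, v2⟫ := by rw [hu2]; nlinarith
    have hune : u ≠ 0 := by
      intro h
      rw [h, inner_zero_left] at hu1pos; exact lt_irrefl _ hu1pos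
    have hnu : (0:ℝ) < ‖u‖ := norm_pos_iff.2 hune
    refine ⟨(‖u‖)⁻¹ • u, ?_, ?_⟩
    · rw [norm_smul]; simp [abs_of_pos (inv_pos.2 hnu)]
      field_simp
    · rw [real_inner_smul_left, real_inner_smul_left]
      positivity
  · intro κ hκ Ω
    have h2 : ⟪v1, v2⟫ < ‖v1‖ * ‖v2‖ := by
      refine inner_lt_norm_mul_iff_real.2 ?_
      intro h
      have h0 : ‖v2‖ • v1 + (-‖v1‖) • v2 = 0 := by rw [h]; simp
      exact absurd ((hpair _ _ h0).1) (ne_of_gt hn2)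
    have hG : 0 < ‖v1‖^2 * ‖v2‖^2 - ⟪v1, v2⟫^2 := by nlinarith
    have hsurj : ∀ s t : ℝ, ∃ K : EuclideanSpace ℝ (Fin d), ⟪v1, K⟫ = s ∧ ⟪v2, K⟫ = t := by
      intro s t
      obtain ⟨p, hp⟩ : ∃ p : ℝ, ⟪v1, v2⟫ = p := ⟨_, rfl⟩
      have hp2 : ⟪v2, v1⟫ = p := by rw [real_inner_comm]; exact hp
      rw [hp] at hG
      set D := ‖v1‖^2 * ‖v2‖^2 - p^2 with hDdef
      have hDne : D ≠ 0 := ne_of_gt hG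
      refine ⟨((s * ‖v2‖^2 - t * p)/D) • v1 + ((t * ‖v1‖^2 - s * p)/D) • v2,
        ?_, ?_⟩
      · rw [inner_add_right, real_inner_smul_right, real_inner_smul_right,
          real_inner_self_eq_norm_sq, hp]
        field_simp
        ring
      · rw [inner_add_right, real_inner_smul_right, real_inner_smul_right,
          real_inner_self_eq_norm_sq, hp2]
        field_simp
        ring
    obtain ⟨K, hK1, hK2⟩ := hsurj ((κ 0 0).re + Ω + 1) ((κ 1 1).re + Ω + Complex.normSq (κ 0 1))
    refine ⟨K, ?_⟩
    have h00 : κ 0 0 = ((κ 0 0).re : ℂ) := by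
      have := congrFun (congrFun hκ.eq 0) 0
      simp [Matrix.conjTranspose_apply] at this
      exact (Complex.conj_eq_iff_re.1 this).symm
    have h11 : κ 1 1 = ((κ 1 1).re : ℂ) := by
      have := congrFun (congrFun hκ.eq 1) 1
      simp [Matrix.conjTranspose_apply] at this
      exact (Complex.conj_eq_iff_re.1 this).symm
    have h10 : κ 1 0 = (starRingEnd ℂ) (κ 0 1) := by
      have := congrFun (congrFun hκ.eq 1) 0
      simpa [Matrix.conjTranspose_apply] using this.symm
    rw [Matrix.det_fin_two]
    simp only [Matrix.sub_apply, Matrix.smul_apply, Matrix.one_apply_eq,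
      Matrix.one_apply_ne (by decide : (0 : Fin 2) ≠ 1),
      Matrix.one_apply_ne (by decide : (1 : Fin 2) ≠ 0), Matrix.cons_val',
      Matrix.cons_val_zero, Matrix.cons_val_one, Matrix.head_cons, Matrix.empty_val',
      Matrix.cons_val_fin_one, Matrix.head_fin_const, smul_zero, sub_zero, smul_eq_mul, mul_one,
      Matrix.of_apply]
    rw [hK1, hK2, h00, h11, h10]
    have hcc : ((κ 0 1) * (starRingEnd ℂ) (κ 0 1)) = (Complex.normSq (κ 0 1) : ℂ) :=
      Complex.mul_conj _
    simp only [Complex.ofReal_re]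
    push_cast
    linear_combination -hcc
end

section
/- Let v_g^{(1)} = α v_g^{(2)} with α > 0, v_g^{(2)} ≠ 0, and κ a Hermitian 2×2 matrix. Then for every Ω ∈ ℝ there exists K ∈ ℝ^d with Ω an eigenvalue of diag(v_g^{(1)}·K, v_g^{(2)}·K) − κ; i.e., the two-mode coupled mode operator with parallel group velocities has no spectral gap. -/
open RealInnerProductSpace

/-- for parallel group velocities `v1 = α • v2`, `α > 0`, and any
Hermitian `κ`, every `Ω ∈ ℝ` is an eigenvalue of `diag(v1·K, v2·K) - κ` for some
`K`: no spectral gap. -/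
theorem stmt5 (d : ℕ) (α : ℝ) (hα : 0 < α) (v2 : EuclideanSpace ℝ (Fin d))
    (hv2 : v2 ≠ 0) (v1 : EuclideanSpace ℝ (Fin d)) (hv1 : v1 = α • v2)
    (κ : Matrix (Fin 2) (Fin 2) ℂ) (hκ : κ.IsHermitian) :
    ∀ Ω : ℝ, ∃ K : EuclideanSpace ℝ (Fin d),
      (!![((⟪v1, K⟫ : ℝ) : ℂ), 0; 0, ((⟪v2, K⟫ : ℝ) : ℂ)] - κ - (Ω : ℂ) • 1).det = 0 := by
  intro Ω
  set a : ℝ := (κ 0 0).re with ha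
  set b : ℝ := (κ 1 1).re with hb
  set C : ℝ := Complex.normSq (κ 0 1) with hC
  set A : ℝ := a + Ω with hA
  set B : ℝ := b + Ω with hB
  set r : ℝ := Real.sqrt ((α * B - A) ^ 2 + 4 * α * C) with hr
  have hCnn : 0 ≤ C := Complex.normSq_nonneg _
  have hDnn : 0 ≤ (α * B - A) ^ 2 + 4 * α * C := by positivity
  have hr2 : r ^ 2 = (α * B - A) ^ 2 + 4 * α * C := Real.sq_sqrt hDnn
  set s : ℝ := (A + α * B + r) / (2 * α) with hs
  have hαne : (α : ℝ) ≠ 0 := ne_of_gt hα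
  -- key real identity
  have key : (α * s - A) * (s - B) = C := by
    have h1 : α * s - A = (α * B - A + r) / 2 := by
      rw [hs]; field_simp; ring
    have h2 : s - B = (A - α * B + r) / (2 * α) := by
      rw [hs]; field_simp; ring
    rw [h1, h2]
    field_simp
    nlinarith [hr2]
  -- diagonal entries of κ are real
  have h00 : κ 0 0 = (a : ℂ) := by
    have := hκ.apply 0 0
    rw [ha]
    exact (Complex.conj_eq_iff_re.mp this).symm
  have h11 : κ 1 1 = (b : ℂ) := by
    have := hκ.apply 1 1
    rw [hb]
    exact (Complex.conj_eq_iff_re.mp this).symm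
  have h10 : κ 1 0 = (starRingEnd ℂ) (κ 0 1) := by
    have := hκ.apply 1 0
    exact this.symm
  have hmul : κ 0 1 * κ 1 0 = (C : ℂ) := by
    rw [h10, Complex.mul_conj, hC]
  -- pick K
  have hv2sq : ⟪v2, v2⟫ = ‖v2‖ ^ 2 := real_inner_self_eq_norm_sq v2
  have hnz : ‖v2‖ ^ 2 ≠ 0 := pow_ne_zero 2 (norm_ne_zero_iff.mpr hv2)
  refine ⟨(s / ‖v2‖ ^ 2) • v2, ?_⟩
  have hi2 : (⟪v2, (s / ‖v2‖ ^ 2) • v2⟫ : ℝ) = s := by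
    rw [real_inner_smul_right, hv2sq]; field_simp
  have hi1 : (⟪v1, (s / ‖v2‖ ^ 2) • v2⟫ : ℝ) = α * s := by
    rw [hv1, real_inner_smul_left, real_inner_smul_right, hv2sq]; field_simp
  rw [hi1, hi2]
  have expand : (!![((α * s : ℝ) : ℂ), 0; 0, ((s : ℝ) : ℂ)] - κ - (Ω : ℂ) • 1).det
      = (((α * s : ℝ) : ℂ) - κ 0 0 - Ω) * (((s : ℝ) : ℂ) - κ 1 1 - Ω)
        - (0 - κ 0 1) * (0 - κ 1 0) := by
    simp [Matrix.det_fin_two, Matrix.one_apply, smul_eq_mul]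
  rw [expand, h00, h11]
  have keyC : ((α : ℂ) * s - ((A : ℝ) : ℂ)) * ((s : ℂ) - ((B : ℝ) : ℂ)) = ((C : ℝ) : ℂ) :=
    mod_cast congrArg (fun x : ℝ => (x : ℂ)) key
  rw [hA, hB] at keyC
  push_cast at keyC ⊢
  linear_combination keyC - hmul
end

section
/- Let α1, α2, α3 ∈ ℂ with |α1|² > 2(|α2|² + |α3|²). Then for Ω = 0 the equation Ω⁴ − Ω²(K_ξ² + K_η² + 2Σ|α_j|²) + 4Ω(Re(conj(α1)α2α3) + Re(α1 conj(α2) α3)) + (K_ξ K_η + |α2|² − |α3|²)² + |α1|²(K_ξ² + K_η² + |α1|²) = 2Re(|α1|² α3² + α2² conj(α1)²) has no real solution (K_ξ, K_η) ∈ ℝ²; in particular 0 is in a spectral gap of the four-mode coupled mode operator. -/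
open ComplexConjugate

theorem Complex.re_norm_sq_mul_sq_add_sq_mul_conj_sq_le (a b c : ℂ) :
    ((‖a‖ : ℂ) ^ 2 * c ^ 2 + b ^ 2 * conj a ^ 2).re ≤ ‖a‖ ^ 2 * (‖b‖ ^ 2 + ‖c‖ ^ 2) :=
  calc ((‖a‖ : ℂ) ^ 2 * c ^ 2 + b ^ 2 * conj a ^ 2).re
      ≤ ‖(‖a‖ : ℂ) ^ 2 * c ^ 2 + b ^ 2 * conj a ^ 2‖ := Complex.re_le_norm _
    _ ≤ ‖(‖a‖ : ℂ) ^ 2 * c ^ 2‖ + ‖b ^ 2 * conj a ^ 2‖ := norm_add_le _ _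
    _ = ‖a‖ ^ 2 * (‖b‖ ^ 2 + ‖c‖ ^ 2) := by
      simp only [Complex.norm_mul, norm_pow, Complex.norm_real, norm_norm, RCLike.norm_conj]
      ring

theorem sq_le_sq_mul_add_mul_sum_sq_add (a p q d : ℝ) (ha : 0 ≤ a) :
    a ^ 2 ≤ (p * q + d) ^ 2 + a * (p ^ 2 + q ^ 2 + a) := by
  linarith [sq_nonneg (p * q + d), mul_nonneg ha (add_nonneg (sq_nonneg p) (sq_nonneg q))]

/-- if `|α1|² > 2(|α2|² + |α3|²)` then the four-mode dispersion
relation at `Ω = 0` has no real solution `(Kξ, Kη)`; `0` lies in a spectral gap. -/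
theorem stmt7 (α1 α2 α3 : ℂ)
    (h : ‖α1‖ ^ 2 > 2 * (‖α2‖ ^ 2 + ‖α3‖ ^ 2)) :
    ∀ Ω : ℝ, Ω = 0 → ∀ Kξ Kη : ℝ,
      ¬(Ω ^ 4
          - Ω ^ 2 * (Kξ ^ 2 + Kη ^ 2
              + 2 * (‖α1‖ ^ 2 + ‖α2‖ ^ 2 + ‖α3‖ ^ 2))
          + 4 * Ω * (((starRingEnd ℂ) α1 * α2 * α3).re + (α1 * (starRingEnd ℂ) α2 * α3).re)
          + (Kξ * Kη + ‖α2‖ ^ 2 - ‖α3‖ ^ 2) ^ 2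
          + ‖α1‖ ^ 2 * (Kξ ^ 2 + Kη ^ 2 + ‖α1‖ ^ 2)
        = 2 * (((‖α1‖ : ℂ) ^ 2 * α3 ^ 2
              + α2 ^ 2 * ((starRingEnd ℂ) α1) ^ 2).re)) := by
  rintro Ω rfl Kξ Kη hdisp
  have hlhs := sq_le_sq_mul_add_mul_sum_sq_add (‖α1‖ ^ 2) Kξ Kη (‖α2‖ ^ 2 - ‖α3‖ ^ 2)
    (sq_nonneg _)
  have hrhs := Complex.re_norm_sq_mul_sq_add_sq_mul_conj_sq_le α1 α2 α3
  have hα1 : 0 < ‖α1‖ ^ 2 := lt_of_le_of_lt (by positivity) h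
  -- |α1|⁴ ≤ LHS = RHS ≤ 2|α1|²(|α2|² + |α3|²) < |α1|⁴
  linarith [mul_lt_mul_of_pos_left h hα1]
end
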